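/- arXiv:1909.05283 — 2 statements merged into one kernel-verified Lean document; each statement's English description precedes it below -/
import Mathlib

section
/- The Schubert structure operator Λ°_α := e^{-α} r_α (-π_α) ⊗ 1 ⊗ 1 + e^{-α} r_α ⊗ π_α ⊗ 1 + e^{-α} r_α ⊗ 1 ⊗ π_α + (1-e^{-α}) r_α ⊗ π_α ⊗ π_α is idempotent: (Λ°_α)² = Λ°_α. -/
/-!
Write `X = t r`, an involution. From `(1 - t) π = 1 - X`, idempotency of `π` and cancellation of
`1 - t` one gets `X π = π - 1 + X`, `r π = π`, `π X = -π` and `π r = r + 1 - π`. The commuting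
idempotents `p`, `q` split `Λ°_α` along the blocks `(1 - p)(1 - q)`, `p (1 - q)`, `(1 - p) q`, `p q`,
on which it acts by `-X π`, `1 - π`, `1 - π` and `r + 1 - π` respectively. Each of these is
idempotent, hence so is `Λ°_α`.
-/

section Blocks

variable {A : Type*} [Ring A] {a b e x : A}

theorem Commute.mul_one_sub_add_mul_left (ha : Commute a x) (hb : Commute b x)
    (he : Commute e x) : Commute (a * (1 - e) + b * e) x :=
  (ha.mul_left ((Commute.one_left x).sub_left he)).add_left (hb.mul_left he)

theorem IsIdempotentElem.mul_one_sub_add_mul (ha : IsIdempotentElem a) (hb : IsIdempotentElem b)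
    (he : IsIdempotentElem e) (hae : Commute a e) (hbe : Commute b e) :
    IsIdempotentElem (a * (1 - e) + b * e) := by
  have hae' : Commute a (1 - e) := (Commute.one_right a).sub_right hae
  have hbe' : Commute b (1 - e) := (Commute.one_right b).sub_right hbe
  refine (IsIdempotentElem.mul_of_commute hae' ha he.one_sub).add
    (IsIdempotentElem.mul_of_commute hbe hb he) ?_
  rw [hbe'.symm.mul_mul_mul_comm, he.one_sub_mul_self, hae.symm.mul_mul_mul_comm,
    he.mul_one_sub_self, mul_zero, mul_zero, add_zero]

end Blocks

section Demazure

variable {A : Type*} [Ring A] {t s r π x : A}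

theorem tr_mul_tr (hr : r * r = 1) (hts : t * s = 1) (hrt : r * t = s * r) :
    t * r * (t * r) = 1 :=
  calc t * r * (t * r) = t * (r * t) * r := by noncomm_ring
    _ = t * s * (r * r) := by rw [hrt]; noncomm_ring
    _ = 1 := by rw [hts, hr, one_mul]

theorem mul_demazure (hπ : (1 - t) * π = 1 - t * r) : t * π = π - 1 + t * r :=
  calc t * π = π - (1 - t) * π := by noncomm_ring
    _ = π - 1 + t * r := by rw [hπ]; abel

theorem tr_mul_demazure (hπ : (1 - t) * π = 1 - t * r) (hππ : IsIdempotentElem π) :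
    t * r * π = t * π :=
  calc t * r * π = (1 - (1 - t) * π) * π := by rw [hπ]; noncomm_ring
    _ = π - π * π + t * (π * π) := by noncomm_ring
    _ = t * π := by rw [hππ.eq]; abel

theorem reflection_mul_demazure (hst : s * t = 1) (hπ : (1 - t) * π = 1 - t * r)
    (hππ : IsIdempotentElem π) : r * π = π := by
  have h : t * (r * π) = t * π := by rw [← mul_assoc, tr_mul_demazure hπ hππ]
  simpa only [← mul_assoc, hst, one_mul] using congrArg (s * ·) h

theorem demazure_mul_tr (hreg : ∀ y : A, (1 - t) * y = 0 → y = 0)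
    (hπ : (1 - t) * π = 1 - t * r) (hX : t * r * (t * r) = 1) : π * (t * r) = -π := by
  refine eq_neg_of_add_eq_zero_left (hreg _ ?_)
  calc (1 - t) * (π * (t * r) + π) = (1 - t) * π * (t * r) + (1 - t) * π := by noncomm_ring
    _ = (1 - t * r) * (t * r) + (1 - t * r) := by rw [hπ]
    _ = 1 - t * r * (t * r) := by noncomm_ring
    _ = 0 := by rw [hX, sub_self]

theorem demazure_mul_reflection (hreg : ∀ y : A, (1 - t) * y = 0 → y = 0)
    (hπ : (1 - t) * π = 1 - t * r) (hr : r * r = 1) : π * r = r + 1 - π := by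
  refine sub_eq_zero.mp (hreg _ ?_)
  calc (1 - t) * (π * r - (r + 1 - π)) = (1 - t) * π * r - (1 - t) * (r + 1) + (1 - t) * π := by
        noncomm_ring
    _ = (1 - t * r) * r - (1 - t) * (r + 1) + (1 - t * r) := by rw [hπ]
    _ = t * (1 - r * r) := by noncomm_ring
    _ = 0 := by rw [hr, sub_self, mul_zero]

theorem IsIdempotentElem.neg_mul_of_mul_eq_neg (hππ : IsIdempotentElem π) (h : π * x = -π) :
    IsIdempotentElem (-(x * π)) :=
  calc -(x * π) * -(x * π) = x * (π * x) * π := by noncomm_ring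
    _ = -(x * (π * π)) := by rw [h]; noncomm_ring
    _ = -(x * π) := by rw [hππ.eq]

theorem isIdempotentElem_add_one_sub (hr : r * r = 1) (hrπ : r * π = π) (hπr : π * r = r + 1 - π)
    (hππ : IsIdempotentElem π) : IsIdempotentElem (r + (1 - π)) :=
  calc (r + (1 - π)) * (r + (1 - π)) = r * r + 2 * r - r * π - π * r + (1 - π) * (1 - π) := by
        noncomm_ring
    _ = r + (1 - π) := by rw [hr, hrπ, hπr, hππ.one_sub.eq]; noncomm_ring

end Demazure

theorem Schubert_structure_operator_Lambda_circ_idempotent_general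
    {A : Type*} [Ring A] (t s r π p q : A)
    (hr : r * r = 1)
    (hts : t * s = 1) (hst : s * t = 1)
    (hrt : r * t = s * r)
    (hreg : ∀ x : A, (1 - t) * x = 0 → x = 0)
    (hπ : (1 - t) * π = 1 - t * r)
    (hππ : π * π = π)
    (hp : p * p = p) (hq : q * q = q)
    (hpq : p * q = q * p)
    (hpt : p * t = t * p) (hpr : p * r = r * p)
    (hpπ : p * π = π * p)
    (hqt : q * t = t * q) (hqr : q * r = r * q)
    (hqπ : q * π = π * q) :
    (-(t * r * π) + t * r * p + t * r * q + (1 - t) * r * (p * q)) *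
      (-(t * r * π) + t * r * p + t * r * q + (1 - t) * r * (p * q)) =
      -(t * r * π) + t * r * p + t * r * q + (1 - t) * r * (p * q) := by
  have hπ_idem : IsIdempotentElem π := hππ
  have hrπ : r * π = π := reflection_mul_demazure hst hπ hπ_idem
  have h₀ : IsIdempotentElem (-(t * r * π)) :=
    hπ_idem.neg_mul_of_mul_eq_neg (demazure_mul_tr hreg hπ (tr_mul_tr hr hts hrt))
  have h₂ : IsIdempotentElem (r + (1 - π)) :=
    isIdempotentElem_add_one_sub hr hrπ (demazure_mul_reflection hreg hπ hr) hπ_idem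
  have hblocks : -(t * r * π) + t * r * p + t * r * q + (1 - t) * r * (p * q) =
      (-(t * r * π) * (1 - q) + (1 - π) * q) * (1 - p) +
        ((1 - π) * (1 - q) + (r + (1 - π)) * q) * p := by
    rw [tr_mul_demazure hπ hπ_idem, mul_demazure hπ, hpq]
    noncomm_ring
  have hc₀p : Commute (-(t * r * π)) p :=
    ((Commute.mul_left hpt.symm hpr.symm).mul_left hpπ.symm).neg_left
  have hc₀q : Commute (-(t * r * π)) q :=
    ((Commute.mul_left hqt.symm hqr.symm).mul_left hqπ.symm).neg_left
  have hc₁p : Commute (1 - π) p := (Commute.one_left p).sub_left hpπ.symm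
  have hc₁q : Commute (1 - π) q := (Commute.one_left q).sub_left hqπ.symm
  have hc₂p : Commute (r + (1 - π)) p := Commute.add_left hpr.symm hc₁p
  have hc₂q : Commute (r + (1 - π)) q := Commute.add_left hqr.symm hc₁q
  rw [hblocks]
  exact (h₀.mul_one_sub_add_mul hπ_idem.one_sub hq hc₀q hc₁q).mul_one_sub_add_mul
    (hπ_idem.one_sub.mul_one_sub_add_mul h₂ hq hc₁q hc₂q) hp
    (hc₀p.mul_one_sub_add_mul_left hc₁p hpq.symm) (hc₁p.mul_one_sub_add_mul_left hc₂p hpq.symm)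

/-- The K-theoretic Schubert structure operator
`Λ°_α = e^{-α} r_α (-π_α) ⊗ 1 ⊗ 1 + e^{-α} r_α ⊗ π_α ⊗ 1
        + e^{-α} r_α ⊗ 1 ⊗ π_α + (1-e^{-α}) r_α ⊗ π_α ⊗ π_α`
is idempotent. We encode the triple tensor product abstractly: in a ring `A`,
the first factor is the operator algebra on the group algebra of the weight
lattice, generated by `t = e^{-α}` (with inverse `s = e^α`), the reflection
`r` (`r² = 1`, `r t = s r`), and the isobaric Demazure operator `π`
characterized by `(1 - t) π = 1 - t r` (with `1 - t` left-regular and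
`π² = π`); the second and third factors are idempotents `p`, `q`, and
elements of distinct factors commute. -/
theorem Schubert_structure_operator_Lambda_circ_idempotent
    {A : Type*} [Ring A] (t s r π p q : A)
    (hr : r * r = 1)
    (hts : t * s = 1) (hst : s * t = 1)
    (hrt : r * t = s * r)
    (hreg : ∀ x : A, (1 - t) * x = 0 → x = 0)
    (hπ : (1 - t) * π = 1 - t * r)
    (hππ : π * π = π)
    (hp : p * p = p) (hq : q * q = q)
    (hpq : p * q = q * p)
    (hpt : p * t = t * p) (hps : p * s = s * p) (hpr : p * r = r * p)
    (hpπ : p * π = π * p)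
    (hqt : q * t = t * q) (hqs : q * s = s * q) (hqr : q * r = r * q)
    (hqπ : q * π = π * q) :
    (-(t * r * π) + t * r * p + t * r * q + (1 - t) * r * (p * q)) *
      (-(t * r * π) + t * r * p + t * r * q + (1 - t) * r * (p * q)) =
      -(t * r * π) + t * r * p + t * r * q + (1 - t) * r * (p * q) :=
  Schubert_structure_operator_Lambda_circ_idempotent_general t s r π p q hr hts hst hrt hreg hπ hππ
    hp hq hpq hpt hpr hpπ hqt hqr hqπ
end

section
/- The Schubert structure operator Λ_α := -𝛿_α r_α ⊗ 1 ⊗ 1 + r_α ⊗ 𝛿_α ⊗ 1 + r_α ⊗ 1 ⊗ 𝛿_α + (e^{-α}-1) r_α ⊗ 𝛿_α ⊗ 𝛿_α is idempotent: Λ_α² = Λ_α. -/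
/-!
Since `p` and `q` are commuting idempotents that commute with the first tensor factor, `Λ_α`
splits along the corners `(1 - p)(1 - q)`, `p(1 - q)`, `(1 - p)q`, `pq`, on which it acts as
`δ`, `δ + r`, `δ + r` and `δ + r + t r`. Each of these is idempotent in the first factor; the
relations needed there (`δ r = -δ`, `r δ = t δ`, `δ t = δ - 1 - s r`) all follow by cancelling
the left-regular element `1 - t` against `(1 - t) δ = 1 - r`.
-/

section Idempotent

variable {A : Type*} [Ring A]

theorem IsIdempotentElem.add_mul_of_commute {u v e : A} (he : IsIdempotentElem e)
    (heu : Commute e u) (hev : Commute e v) (hu : IsIdempotentElem u)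
    (huv : IsIdempotentElem (u + v)) : IsIdempotentElem (u + v * e) := by
  have hcross : u * v + v * u + v * v = v := by
    have h := huv.eq
    rwa [add_mul, mul_add, mul_add, hu.eq, add_assoc, add_right_inj, ← add_assoc] at h
  have hveu : v * e * u = v * u * e := by rw [mul_assoc, heu.eq, ← mul_assoc]
  have hvev : v * e * (v * e) = v * v * e := by
    rw [← mul_assoc, mul_assoc v e v, hev.eq, ← mul_assoc, mul_assoc, he.eq]
  calc (u + v * e) * (u + v * e)
      = u * u + (u * v + v * u + v * v) * e := by
        rw [add_mul, mul_add, mul_add, hveu, hvev, ← mul_assoc, add_mul, add_mul]; abel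
    _ = u + v * e := by rw [hu.eq, hcross]

theorem IsIdempotentElem.add_mul_add_mul_add_mul_mul {a b c p q : A}
    (hp : IsIdempotentElem p) (hq : IsIdempotentElem q) (hpq : Commute p q)
    (hpa : Commute p a) (hpb : Commute p b) (hpc : Commute p c)
    (hqa : Commute q a) (hqb : Commute q b) (hqc : Commute q c)
    (ha : IsIdempotentElem a) (hab : IsIdempotentElem (a + b))
    (habc : IsIdempotentElem (a + b + (b + c))) :
    IsIdempotentElem (a + b * p + b * q + c * (p * q)) := by
  have hsplit : a + b * p + b * q + c * (p * q) = a + b * q + (b + c * q) * p := by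
    rw [hpq.eq, add_mul, mul_assoc c]; abel
  have hfold : a + b * q + (b + c * q) = a + b + (b + c) * q := by
    rw [add_mul]; abel
  rw [hsplit]
  refine hp.add_mul_of_commute (hpa.add_right (hpb.mul_right hpq))
    (hpb.add_right (hpc.mul_right hpq)) (hq.add_mul_of_commute hqa hqb ha hab) ?_
  rw [hfold]
  exact hq.add_mul_of_commute (hqa.add_right hqb) (hqb.add_right hqc) hab habc

end Idempotent

namespace Demazure

variable {A : Type*} [Ring A] {t s r δ : A}

theorem t_mul_eq (hδ : (1 - t) * δ = 1 - r) : t * δ = δ - 1 + r := by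
  have h : δ - t * δ = 1 - r := by rw [← hδ]; noncomm_ring
  calc t * δ = δ - (δ - t * δ) := by abel
    _ = δ - 1 + r := by rw [h]; abel

theorem mul_reflection_eq_neg (hr : r * r = 1) (hreg : IsLeftRegular (1 - t))
    (hδ : (1 - t) * δ = 1 - r) : δ * r = -δ := by
  apply hreg
  calc (1 - t) * (δ * r) = (1 - r) * r := by rw [← mul_assoc, hδ]
    _ = -(1 - r) := by rw [sub_mul, one_mul, hr]; abel
    _ = (1 - t) * -δ := by rw [mul_neg, hδ]

theorem t_mul_reflection (hr : r * r = 1) (hrt : r * t = s * r) : t * r = r * s :=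
  calc t * r = r * (r * t) * r := by rw [← mul_assoc, hr, one_mul]
    _ = r * s := by rw [hrt, mul_assoc, mul_assoc, hr, mul_one]

theorem reflection_mul_eq_t_mul (hr : r * r = 1) (hrt : r * t = s * r) (hst : s * t = 1)
    (hreg : IsLeftRegular (1 - t)) (hδ : (1 - t) * δ = 1 - r) : r * δ = t * δ := by
  have htr := t_mul_reflection hr hrt
  have hsδ : (1 - s) * δ = -(s * (1 - r)) := by
    rw [← hδ, ← mul_assoc, ← neg_mul, mul_sub, hst]; noncomm_ring
  apply hreg
  calc (1 - t) * (r * δ) = r * ((1 - s) * δ) := by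
        rw [sub_mul, one_mul, ← mul_assoc, htr]; noncomm_ring
    _ = -(t * r * (1 - r)) := by rw [hsδ, htr]; noncomm_ring
    _ = t * ((1 - t) * δ) := by rw [hδ, mul_assoc, mul_sub, mul_one, hr]; noncomm_ring
    _ = (1 - t) * (t * δ) := by noncomm_ring

theorem isIdempotentElem_add_reflection (hr : r * r = 1) (hrt : r * t = s * r)
    (hst : s * t = 1) (hreg : IsLeftRegular (1 - t)) (hδ : (1 - t) * δ = 1 - r)
    (hδδ : δ * δ = δ) : IsIdempotentElem (δ + r) := by
  have hrδ := reflection_mul_eq_t_mul hr hrt hst hreg hδ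
  calc (δ + r) * (δ + r) = δ * δ + δ * r + r * δ + r * r := by noncomm_ring
    _ = δ + r := by
      rw [hδδ, mul_reflection_eq_neg hr hreg hδ, hrδ, t_mul_eq hδ, hr]; abel

theorem mul_t_eq (hrt : r * t = s * r) (hts : t * s = 1) (hreg : IsLeftRegular (1 - t))
    (hδ : (1 - t) * δ = 1 - r) : δ * t = δ - 1 - s * r := by
  apply hreg
  calc (1 - t) * (δ * t) = t - s * r := by rw [← mul_assoc, hδ, sub_mul, one_mul, hrt]
    _ = (1 - t) * (δ - 1 - s * r) := by
      rw [mul_sub, mul_sub, hδ, sub_mul (1 : A) t (s * r), ← mul_assoc t, hts]; noncomm_ring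

theorem isIdempotentElem_add_reflection_add_t_mul_reflection (hr : r * r = 1)
    (hrt : r * t = s * r) (hts : t * s = 1) (hst : s * t = 1) (hreg : IsLeftRegular (1 - t))
    (hδ : (1 - t) * δ = 1 - r) (hδδ : δ * δ = δ) : IsIdempotentElem (δ + r + t * r) := by
  have hrtr : r * t * r = s := by rw [hrt, mul_assoc, hr, mul_one]
  have hxy : (δ + r) * (t * r) = -(δ + r) := by
    rw [add_mul, ← mul_assoc, ← mul_assoc, hrtr, mul_t_eq hrt hts hreg hδ, sub_mul, sub_mul,
      mul_reflection_eq_neg hr hreg hδ, mul_assoc, hr]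
    noncomm_ring
  have hyx : t * r * (δ + r) = δ + r - 1 + t * r := by
    rw [mul_add, mul_assoc, mul_assoc, reflection_mul_eq_t_mul hr hrt hst hreg hδ, hr,
      t_mul_eq hδ, mul_add, mul_sub, mul_one, t_mul_eq hδ]
    abel
  have hyy : t * r * (t * r) = 1 := by
    rw [← mul_assoc, mul_assoc t r t, hrt, ← mul_assoc, mul_assoc, hr, mul_one, hts]
  calc (δ + r + t * r) * (δ + r + t * r)
      = (δ + r) * (δ + r) + (δ + r) * (t * r) + (t * r * (δ + r) + t * r * (t * r)) := by
        noncomm_ring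
    _ = δ + r + t * r := by
      rw [(isIdempotentElem_add_reflection hr hrt hst hreg hδ hδδ).eq, hxy, hyx, hyy]; abel

end Demazure

-- `t = e^{-α}` and `s = e^α`; `p` and `q` stand for `𝛿_α` in the second and third tensor
-- factors, and the tensor product is encoded by their commuting with the first factor.
theorem Schubert_structure_operator_Lambda_idempotent_general
    {A : Type*} [Ring A] (t s r δ p q : A)
    (hr : r * r = 1)
    (hts : t * s = 1) (hst : s * t = 1)
    (hrt : r * t = s * r)
    (hreg : ∀ x : A, (1 - t) * x = 0 → x = 0)
    (hδ : (1 - t) * δ = 1 - r)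
    (hδδ : δ * δ = δ)
    (hp : p * p = p) (hq : q * q = q)
    (hpq : p * q = q * p)
    (hpt : p * t = t * p) (hpr : p * r = r * p)
    (hpδ : p * δ = δ * p)
    (hqt : q * t = t * q) (hqr : q * r = r * q)
    (hqδ : q * δ = δ * q) :
    (-(δ * r) + r * p + r * q + (t - 1) * r * (p * q)) *
      (-(δ * r) + r * p + r * q + (t - 1) * r * (p * q)) =
      -(δ * r) + r * p + r * q + (t - 1) * r * (p * q) := by
  have hreg' : IsLeftRegular (1 - t) := isLeftRegular_iff_right_eq_zero_of_mul.mpr hreg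
  have hδr : -(δ * r) = δ := by rw [Demazure.mul_reflection_eq_neg hr hreg' hδ, neg_neg]
  have hpt' : Commute p (t - 1) := Commute.sub_right hpt (Commute.one_right p)
  have hqt' : Commute q (t - 1) := Commute.sub_right hqt (Commute.one_right q)
  refine (IsIdempotentElem.add_mul_add_mul_add_mul_mul hp hq hpq
    (Commute.mul_right hpδ hpr).neg_right hpr (hpt'.mul_right hpr)
    (Commute.mul_right hqδ hqr).neg_right hqr (hqt'.mul_right hqr) ?_ ?_ ?_).eq <;> rw [hδr]
  · exact hδδ
  · exact Demazure.isIdempotentElem_add_reflection hr hrt hst hreg' hδ hδδ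
  · convert Demazure.isIdempotentElem_add_reflection_add_t_mul_reflection hr hrt hts hst hreg'
      hδ hδδ using 1
    noncomm_ring

/-- The K-theoretic Schubert structure operator
`Λ_α = -𝛿_α r_α ⊗ 1 ⊗ 1 + r_α ⊗ 𝛿_α ⊗ 1 + r_α ⊗ 1 ⊗ 𝛿_α
       + (e^{-α}-1) r_α ⊗ 𝛿_α ⊗ 𝛿_α`
is idempotent. We encode the triple tensor product abstractly: in a ring `A`,
the first factor is the operator algebra on the group algebra of the weight
lattice, generated by `t = e^{-α}` (with inverse `s = e^α`), the reflection
`r` (`r² = 1`, `r t = s r`), and the ordinary Demazure operator `δ`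
characterized by `(1 - t) δ = 1 - r` (with `1 - t` left-regular and
`δ² = δ`); the second and third factors are idempotents `p`, `q`, and
elements of distinct factors commute. -/
theorem Schubert_structure_operator_Lambda_idempotent
    {A : Type*} [Ring A] (t s r δ p q : A)
    (hr : r * r = 1)
    (hts : t * s = 1) (hst : s * t = 1)
    (hrt : r * t = s * r)
    (hreg : ∀ x : A, (1 - t) * x = 0 → x = 0)
    (hδ : (1 - t) * δ = 1 - r)
    (hδδ : δ * δ = δ)
    (hp : p * p = p) (hq : q * q = q)
    (hpq : p * q = q * p)
    (hpt : p * t = t * p) (hps : p * s = s * p) (hpr : p * r = r * p)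
    (hpδ : p * δ = δ * p)
    (hqt : q * t = t * q) (hqs : q * s = s * q) (hqr : q * r = r * q)
    (hqδ : q * δ = δ * q) :
    (-(δ * r) + r * p + r * q + (t - 1) * r * (p * q)) *
      (-(δ * r) + r * p + r * q + (t - 1) * r * (p * q)) =
      -(δ * r) + r * p + r * q + (t - 1) * r * (p * q) :=
  Schubert_structure_operator_Lambda_idempotent_general t s r δ p q hr hts hst hrt hreg hδ hδδ hp hq
    hpq hpt hpr hpδ hqt hqr hqδ
end
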